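/- arXiv:2502.11728 — 7 statements merged into one kernel-verified Lean document; each statement's English description precedes it below -/
import Mathlib

section
/- For every n : ℕ and every matrix M of size 2^n × 2^n over ℂ, M admits the expansion M = Σ_{a : Fin n → Fin 4} c_a · g_a, where the coefficients are given by c_a = 2^{-n} · Tr(M * g_a); i.e., the n-qubit Pauli tensors span the full matrix algebra of size 2^n with this explicit coefficient formula. -/
/-!
The Pauli matrices satisfy the completeness relation
`∑ s, (σ_s)_{xy} (σ_s)_{ij} = 2 δ_{yi} δ_{xj}`, checked entry by entry. Taking products over
the qubits, it becomes `∑ a, (g_a)_{lk} (g_a)_{ij} = 2^n δ_{ki} δ_{lj}`, and any family of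
matrices with such a relation reconstructs every `M` from the traces `Tr(M g_a)`: the sum
`∑ a, Tr(M g_a) (g_a)_{ij} = ∑ k l, M_{kl} ∑ a, (g_a)_{lk} (g_a)_{ij}` collapses to `2^n M_{ij}`.
-/

open Matrix

noncomputable def pauli : Fin 4 → Matrix (Fin 2) (Fin 2) ℂ
  | 0 => 1
  | 1 => !![0, 1; 1, 0]
  | 2 => !![0, -Complex.I; Complex.I, 0]
  | 3 => !![1, 0; 0, -1]

/-- The `n`-qubit Pauli tensor `g_a = σ_{a 0} ⊗ ⋯ ⊗ σ_{a (n-1)}`, realized as a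
matrix indexed by `Fin n → Fin 2` (a type of cardinality `2 ^ n`), whose entries
are given by the usual Kronecker-product formula. -/
noncomputable def pauliTensor {n : ℕ} (a : Fin n → Fin 4) :
    Matrix (Fin n → Fin 2) (Fin n → Fin 2) ℂ :=
  Matrix.of fun i j => ∏ k, pauli (a k) (i k) (j k)

def numY {n : ℕ} (a : Fin n → Fin 4) : ℕ :=
  (Finset.univ.filter fun k => a k = 2).card

namespace Matrix

variable {K m ι : Type*} [Field K] [Fintype m] [DecidableEq m] [Fintype ι]

theorem eq_sum_trace_mul_smul_of_sum_mul_apply (g : ι → Matrix m m K) {c : K} (hc : c ≠ 0)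
    (hg : ∀ i j k l, ∑ a, g a l k * g a i j = if k = i ∧ l = j then c else 0)
    (M : Matrix m m K) :
    M = ∑ a, (c⁻¹ * (M * g a).trace) • g a := by
  ext i j
  have entry : ∀ a, ((c⁻¹ * (M * g a).trace) • g a) i j
      = c⁻¹ * ∑ k, ∑ l, M k l * (g a l k * g a i j) := by
    intro a
    simp only [smul_apply, smul_eq_mul, trace, diag_apply, mul_apply, Finset.sum_mul, mul_assoc]
  simp only [sum_apply, entry, ← Finset.mul_sum]
  rw [Finset.sum_comm]
  simp only [Finset.sum_comm (γ := ι), ← Finset.mul_sum, hg, mul_ite, mul_zero, ite_and,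
    Finset.sum_ite_irrel, Finset.sum_const_zero, Finset.sum_ite_eq', Finset.mem_univ, if_true]
  field_simp

end Matrix

theorem pauli_sum_mul_apply (x y i j : Fin 2) :
    ∑ s, pauli s x y * pauli s i j = if y = i ∧ x = j then 2 else 0 := by
  fin_cases x <;> fin_cases y <;> fin_cases i <;> fin_cases j <;>
    simp [pauli, Fin.sum_univ_four, one_apply, Complex.I_mul_I, one_add_one_eq_two]

theorem pauliTensor_sum_mul_apply {n : ℕ} (i j k l : Fin n → Fin 2) :
    ∑ a, pauliTensor a l k * pauliTensor a i j = if k = i ∧ l = j then (2 : ℂ) ^ n else 0 := by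
  simp only [pauliTensor, of_apply, ← Finset.prod_mul_distrib]
  rw [← Fintype.prod_sum (fun m s => pauli s (l m) (k m) * pauli s (i m) (j m))]
  simp only [pauli_sum_mul_apply, Fintype.prod_ite_zero, Finset.prod_const, Finset.card_univ,
    Fintype.card_fin, funext_iff, forall_and]

/-- Every `2^n × 2^n` complex matrix expands in the Pauli basis with
coefficients `c_a = 2^{-n} · Tr(M * g_a)`. -/
theorem pauli_expansion (n : ℕ)
    (M : Matrix (Fin n → Fin 2) (Fin n → Fin 2) ℂ) :
    M = ∑ a : Fin n → Fin 4,
      (((2 : ℂ) ^ n)⁻¹ * (M * pauliTensor a).trace) • pauliTensor a :=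
  eq_sum_trace_mul_smul_of_sum_mul_apply pauliTensor (pow_ne_zero n two_ne_zero)
    pauliTensor_sum_mul_apply M
end

section
/- (Y-Gate Even Principle for Pauli mapping of real symmetric matrices.) Let n : ℕ and let M be a 2^n × 2^n complex matrix all of whose entries are real and which is symmetric (Mᵀ = M). Then for every Pauli string a : Fin n → Fin 4 containing an odd number of Y labels, the projection coefficient of M on g_a vanishes: Tr(M * g_a) = 0 (equivalently, c_a = 2^{-n} · Tr(M * g_a) = 0). -/
/-
Transposition fixes σ_I, σ_X, σ_Z and negates σ_Y, and it acts factorwise on a Kronecker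
product, so `g_aᵀ = (-1)^#Y(a) • g_a`. When `#Y(a)` is odd, `g_a` is skew-symmetric, and the
trace of a symmetric matrix times a skew-symmetric one is its own negative.
-/

open Matrix

theorem Matrix.trace_mul_eq_zero_of_transpose_eq_neg {ι R : Type*} [Fintype ι] [CommRing R]
    [IsAddTorsionFree R] {A B : Matrix ι ι R} (hA : Aᵀ = A) (hB : Bᵀ = -B) :
    (A * B).trace = 0 := by
  refine self_eq_neg.mp ?_
  calc (A * B).trace = (A * B)ᵀ.trace := (trace_transpose _).symm
    _ = -(B * A).trace := by rw [transpose_mul, hA, hB, neg_mul, trace_neg]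
    _ = -(A * B).trace := by rw [trace_mul_comm]

theorem pauli_transpose (m : Fin 4) :
    (pauli m)ᵀ = (if m = 2 then (-1 : ℂ) else 1) • pauli m := by
  ext i j
  fin_cases m <;> fin_cases i <;> fin_cases j <;> simp [pauli, one_apply]

theorem pauliTensor_transpose {n : ℕ} (a : Fin n → Fin 4) :
    (pauliTensor a)ᵀ = (-1 : ℂ) ^ numY a • pauliTensor a := by
  ext i j
  have hfactor (k : Fin n) : pauli (a k) (j k) (i k) =
      (if a k = 2 then (-1 : ℂ) else 1) * pauli (a k) (i k) (j k) := by
    simpa using congrFun (congrFun (pauli_transpose (a k)) (i k)) (j k)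
  simp only [transpose_apply, pauliTensor, of_apply, Matrix.smul_apply, smul_eq_mul, hfactor]
  rw [Finset.prod_mul_distrib, Finset.prod_ite, Finset.prod_const, Finset.prod_const_one,
    mul_one, numY]

theorem pauliTensor_transpose_of_odd_numY {n : ℕ} {a : Fin n → Fin 4} (hodd : Odd (numY a)) :
    (pauliTensor a)ᵀ = -pauliTensor a := by
  rw [pauliTensor_transpose, hodd.neg_one_pow, neg_one_smul]

theorem yGate_even_principle_general (n : ℕ)
    (M : Matrix (Fin n → Fin 2) (Fin n → Fin 2) ℂ)
    (hsym : Mᵀ = M)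
    (a : Fin n → Fin 4) (hodd : Odd (numY a)) :
    (M * pauliTensor a).trace = 0 :=
  trace_mul_eq_zero_of_transpose_eq_neg hsym (pauliTensor_transpose_of_odd_numY hodd)

/-- Y-Gate Even Principle: for a real symmetric matrix `M`, the projection on
any Pauli tensor containing an odd number of `Y` labels vanishes. -/
theorem yGate_even_principle (n : ℕ)
    (M : Matrix (Fin n → Fin 2) (Fin n → Fin 2) ℂ)
    (hreal : ∀ i j, (M i j).im = 0) (hsym : Mᵀ = M)
    (a : Fin n → Fin 4) (hodd : Odd (numY a)) :
    (M * pauliTensor a).trace = 0 :=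
  yGate_even_principle_general n M hsym a hodd
end

section
/- For every n : ℕ and every Pauli string a : Fin n → Fin 4: if #Y(a) is even, then every entry of the n-qubit Pauli tensor g_a is real (has zero imaginary part); if #Y(a) is odd, then every entry of g_a is purely imaginary (has zero real part). -/
/-! An entry of `g_a` is a product with one entry of each factor `σ_{a k}`. The entries of
`σ_I`, `σ_X`, `σ_Z` are real and those of `σ_Y` purely imaginary, so the entry is a real
multiple of `i ^ #Y(a)`. -/

open Matrix

namespace Complex

theorem exists_prod_eq_ofReal_mul_I_pow {ι : Type*} (s : Finset ι) (p : ι → Prop)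
    [DecidablePred p] (f : ι → ℂ) (hreal : ∀ k ∈ s, ¬p k → (f k).im = 0)
    (himag : ∀ k ∈ s, p k → (f k).re = 0) :
    ∃ r : ℝ, ∏ k ∈ s, f k = r * I ^ (s.filter p).card := by
  refine ⟨∏ k ∈ s, if p k then (f k).im else (f k).re, ?_⟩
  have hf : ∀ k ∈ s,
      f k = ((if p k then (f k).im else (f k).re : ℝ) : ℂ) * I ^ (if p k then 1 else 0) := by
    intro k hk
    split_ifs with hp
    · simpa [himag k hk hp] using (re_add_im (f k)).symm
    · simpa [hreal k hk hp] using (re_add_im (f k)).symm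
  rw [Finset.prod_congr rfl hf, Finset.prod_mul_distrib, ofReal_prod, Finset.prod_pow_eq_pow_sum,
    Finset.sum_boole, Nat.cast_id]

theorem I_pow_two_mul (m : ℕ) : I ^ (2 * m) = ((-1 : ℝ) ^ m : ℝ) := by
  push_cast
  rw [pow_mul, I_sq]

theorem im_ofReal_mul_I_pow_of_even (r : ℝ) {n : ℕ} (hn : Even n) : (r * I ^ n).im = 0 := by
  obtain ⟨m, rfl⟩ := hn
  rw [← two_mul, I_pow_two_mul, ← ofReal_mul, ofReal_im]

theorem re_ofReal_mul_I_pow_of_odd (r : ℝ) {n : ℕ} (hn : Odd n) : (r * I ^ n).re = 0 := by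
  obtain ⟨m, rfl⟩ := hn
  rw [pow_succ, I_pow_two_mul, ← mul_assoc, ← ofReal_mul, mul_I_re, ofReal_im, neg_zero]

end Complex

theorem pauli_apply_im_eq_zero {m : Fin 4} (hm : m ≠ 2) (x y : Fin 2) : (pauli m x y).im = 0 := by
  fin_cases m <;> fin_cases x <;> fin_cases y <;> simp_all [pauli]

theorem pauli_two_apply_re (x y : Fin 2) : (pauli 2 x y).re = 0 := by
  fin_cases x <;> fin_cases y <;> simp [pauli]

theorem pauliTensor_apply {n : ℕ} (a : Fin n → Fin 4) (i j : Fin n → Fin 2) :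
    pauliTensor a i j = ∏ k, pauli (a k) (i k) (j k) :=
  rfl

/-- If `#Y(a)` is even then every entry of `g_a` is real; if `#Y(a)` is odd then
every entry of `g_a` is purely imaginary. -/
theorem pauliTensor_entries_real_or_imaginary (n : ℕ) (a : Fin n → Fin 4) :
    (Even (numY a) → ∀ i j, (pauliTensor a i j).im = 0) ∧
    (Odd (numY a) → ∀ i j, (pauliTensor a i j).re = 0) := by
  have hentry : ∀ i j, ∃ r : ℝ, pauliTensor a i j = r * Complex.I ^ numY a := fun i j => by
    rw [pauliTensor_apply]
    exact Complex.exists_prod_eq_ofReal_mul_I_pow _ (fun k => a k = 2) _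
      (fun k _ hk => pauli_apply_im_eq_zero hk _ _)
      (fun k _ hk => by simpa only [hk] using pauli_two_apply_re _ _)
  refine ⟨fun heven i j => ?_, fun hodd i j => ?_⟩ <;> obtain ⟨r, hr⟩ := hentry i j <;> rw [hr]
  · exact Complex.im_ofReal_mul_I_pow_of_even r heven
  · exact Complex.re_ofReal_mul_I_pow_of_odd r hodd
end

section
/- Let n : ℕ and let M be a 2^n × 2^n complex matrix all of whose entries are real and which is symmetric (Mᵀ = M). Then for every Pauli string a : Fin n → Fin 4, the Pauli projection coefficient c_a = 2^{-n} · Tr(M * g_a) is a real number (its imaginary part vanishes). -/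
/-!
Both factors are Hermitian: `M` because it is real and symmetric, `g_a` because each Pauli
matrix is. For Hermitian `A`, `B` the trace of `A * B` is fixed by conjugation, since
`conj (tr (A B)) = tr ((A B)ᴴ) = tr (B A) = tr (A B)`, and `2⁻ⁿ` is real.
-/

open Matrix

theorem Matrix.IsHermitian.isSelfAdjoint_trace_mul {ι R : Type*} [Fintype ι] [CommRing R]
    [StarRing R] {A B : Matrix ι ι R} (hA : A.IsHermitian) (hB : B.IsHermitian) :
    IsSelfAdjoint (A * B).trace := by
  rw [IsSelfAdjoint, ← trace_conjTranspose, conjTranspose_mul, hA.eq, hB.eq, trace_mul_comm]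

theorem Matrix.isHermitian_of_im_eq_zero_of_transpose_eq {ι : Type*} {M : Matrix ι ι ℂ}
    (hreal : ∀ i j, (M i j).im = 0) (hsym : Mᵀ = M) : M.IsHermitian :=
  IsHermitian.ext fun i j => by
    rw [Complex.star_def, Complex.conj_eq_iff_im.2 (hreal j i)]
    exact congr_fun₂ hsym i j

theorem pauli_isHermitian (s : Fin 4) : (pauli s).IsHermitian := by
  refine IsHermitian.ext fun i j => ?_
  fin_cases s <;> fin_cases i <;> fin_cases j <;> simp [pauli, one_apply]

theorem pauliTensor_isHermitian {n : ℕ} (a : Fin n → Fin 4) : (pauliTensor a).IsHermitian :=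
  IsHermitian.ext fun i j => by
    simp only [pauliTensor, of_apply, star_prod]
    exact Finset.prod_congr rfl fun k _ => (pauli_isHermitian (a k)).apply (i k) (j k)

/-- For a real symmetric matrix `M`, every Pauli projection coefficient
`c_a = 2^{-n} · Tr(M * g_a)` is a real number. -/
theorem pauli_coeff_real (n : ℕ)
    (M : Matrix (Fin n → Fin 2) (Fin n → Fin 2) ℂ)
    (hreal : ∀ i j, (M i j).im = 0) (hsym : Mᵀ = M)
    (a : Fin n → Fin 4) :
    (((2 : ℂ) ^ n)⁻¹ * (M * pauliTensor a).trace).im = 0 := by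
  have hM : M.IsHermitian := isHermitian_of_im_eq_zero_of_transpose_eq hreal hsym
  have hscalar : IsSelfAdjoint ((2 : ℂ) ^ n)⁻¹ := ((IsSelfAdjoint.ofNat 2).pow n).inv₀
  rw [Complex.im_eq_zero_iff_isSelfAdjoint]
  exact hscalar.mul (hM.isSelfAdjoint_trace_mul (pauliTensor_isHermitian a))
end

section
/- (Lossless generalized Kronecker decomposition.) Let m₁, m₂, n₁, n₂ : ℕ and let R = min (m₁ * n₁) (m₂ * n₂). Every real matrix G indexed by (Fin m₁ × Fin m₂) × (Fin n₁ × Fin n₂) can be written exactly (losslessly) as a sum of R Kronecker products: there exist matrices B_r : Matrix (Fin m₁) (Fin n₁) ℝ and C_r : Matrix (Fin m₂) (Fin n₂) ℝ for r = 1,…,R such that G = Σ_{r=1}^{R} B_r ⊗ C_r. -/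
open Matrix

/-!
Expand `G` in the standard basis of the first tensor factor: the `(a, b)` coefficient is the
block `G ((a, ·), (b, ·))`, so `G = ∑_{a,b} E_{ab} ⊗ G((a, ·), (b, ·))` with `m₁ * n₁` terms.
Expanding in the second factor instead gives `m₂ * n₂` terms; use whichever is fewer.
-/

namespace Matrix

variable {R l m n p ι : Type*} [CommSemiring R]

theorem sum_single_kroneckerMap_submatrix [Fintype l] [Fintype n] [DecidableEq l] [DecidableEq n]
    (G : Matrix (l × m) (n × p) R) :
    ∑ ab : l × n, kroneckerMap (· * ·) (single ab.1 ab.2 (1 : R))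
      (G.submatrix (Prod.mk ab.1) (Prod.mk ab.2)) = G := by
  ext ⟨i₁, i₂⟩ ⟨j₁, j₂⟩
  simp [Matrix.sum_apply, Fintype.sum_prod_type, single_apply, ite_and]

theorem sum_kroneckerMap_submatrix_single [Fintype m] [Fintype p] [DecidableEq m] [DecidableEq p]
    (G : Matrix (l × m) (n × p) R) :
    ∑ ab : m × p, kroneckerMap (· * ·) (G.submatrix (·, ab.1) (·, ab.2))
      (single ab.1 ab.2 (1 : R)) = G := by
  ext ⟨i₁, i₂⟩ ⟨j₁, j₂⟩
  simp [Matrix.sum_apply, Fintype.sum_prod_type, single_apply, ite_and]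

theorem exists_eq_sum_kroneckerMap_of_equiv_left [Fintype l] [Fintype n] [DecidableEq l]
    [DecidableEq n] [Fintype ι] (e : ι ≃ l × n) (G : Matrix (l × m) (n × p) R) :
    ∃ (B : ι → Matrix l n R) (C : ι → Matrix m p R),
      G = ∑ r, kroneckerMap (· * ·) (B r) (C r) :=
  ⟨fun r => single (e r).1 (e r).2 1, fun r => G.submatrix (Prod.mk (e r).1) (Prod.mk (e r).2),
    ((e.sum_comp _).trans (sum_single_kroneckerMap_submatrix G)).symm⟩

theorem exists_eq_sum_kroneckerMap_of_equiv_right [Fintype m] [Fintype p] [DecidableEq m]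
    [DecidableEq p] [Fintype ι] (e : ι ≃ m × p) (G : Matrix (l × m) (n × p) R) :
    ∃ (B : ι → Matrix l n R) (C : ι → Matrix m p R),
      G = ∑ r, kroneckerMap (· * ·) (B r) (C r) :=
  ⟨fun r => G.submatrix (·, (e r).1) (·, (e r).2), fun r => single (e r).1 (e r).2 1,
    ((e.sum_comp _).trans (sum_kroneckerMap_submatrix_single G)).symm⟩

end Matrix

/-- Lossless generalized Kronecker decomposition: every real matrix indexed by
`(Fin m₁ × Fin m₂) × (Fin n₁ × Fin n₂)` is exactly a sum of
`min (m₁ * n₁) (m₂ * n₂)` Kronecker products. -/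
theorem lossless_gkd (m₁ m₂ n₁ n₂ : ℕ)
    (G : Matrix (Fin m₁ × Fin m₂) (Fin n₁ × Fin n₂) ℝ) :
    ∃ (B : Fin (min (m₁ * n₁) (m₂ * n₂)) → Matrix (Fin m₁) (Fin n₁) ℝ)
      (C : Fin (min (m₁ * n₁) (m₂ * n₂)) → Matrix (Fin m₂) (Fin n₂) ℝ),
      G = ∑ r, Matrix.kroneckerMap (· * ·) (B r) (C r) := by
  rcases le_total (m₁ * n₁) (m₂ * n₂) with h | h
  · exact exists_eq_sum_kroneckerMap_of_equiv_left
      ((finCongr (min_eq_left h)).trans finProdFinEquiv.symm) G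
  · exact exists_eq_sum_kroneckerMap_of_equiv_right
      ((finCongr (min_eq_right h)).trans finProdFinEquiv.symm) G
end

section
/- (Rank characterization of Kronecker sum decompositions.) Let m₁, m₂, n₁, n₂, R : ℕ and let G be a real matrix indexed by (Fin m₁ × Fin m₂) × (Fin n₁ × Fin n₂). Then G can be written as G = Σ_{r=1}^{R} B_r ⊗ C_r for some B_r : Matrix (Fin m₁) (Fin n₁) ℝ and C_r : Matrix (Fin m₂) (Fin n₂) ℝ if and only if the rank of the rearranged matrix R(G) is at most R. -/
/-!
The rearrangement is a reindexing of entries that sends `B ⊗ C` to the rank-one matrix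
`vec B * (vec C)ᵀ`, so it turns a sum of `R` Kronecker products into a product of a matrix with
`R` columns and one with `R` rows. A matrix has rank at most `R` exactly when it factors in this
way: its column space is spanned by `R` vectors.
-/

open Matrix

/-- The Van Loan rearrangement operator. -/
def rearrange {m₁ m₂ n₁ n₂ : ℕ}
    (G : Matrix (Fin m₁ × Fin m₂) (Fin n₁ × Fin n₂) ℝ) :
    Matrix (Fin m₁ × Fin n₁) (Fin m₂ × Fin n₂) ℝ :=
  Matrix.of fun p q => G (p.1, q.1) (p.2, q.2)

theorem Submodule.exists_fin_le_span_range_of_finrank_le {K V : Type*} [DivisionRing K]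
    [AddCommGroup V] [Module K V] (W : Submodule K V) [FiniteDimensional K W] {n : ℕ}
    (h : Module.finrank K W ≤ n) : ∃ v : Fin n → V, W ≤ Submodule.span K (Set.range v) := by
  let b := Module.finBasis K W
  let v : Fin n → V := Function.extend (Fin.castLE h) (W.subtype ∘ b) 0
  refine ⟨v, ?_⟩
  calc W = (⊤ : Submodule K W).map W.subtype := by simp
    _ = Submodule.span K (Set.range (W.subtype ∘ b)) := by
          rw [← b.span_eq, Submodule.map_span, ← Set.range_comp]
    _ ≤ Submodule.span K (Set.range v) := Submodule.span_mono <| Set.range_subset_iff.2 fun s =>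
          ⟨Fin.castLE h s, (Fin.castLE_injective h).extend_apply _ _ s⟩

namespace Matrix

variable {m n ι K : Type*} [Fintype ι]

theorem exists_eq_mul_of_col_mem_span [CommSemiring K] (M : Matrix m n K) (v : ι → m → K)
    (hM : ∀ j, M.col j ∈ Submodule.span K (Set.range v)) :
    ∃ B : Matrix ι n K, M = (of fun i r => v r i) * B := by
  choose c hc using fun j => (Submodule.mem_span_range_iff_exists_fun K).1 (hM j)
  refine ⟨of fun r j => c j r, ?_⟩
  ext i j
  rw [← col_apply M j i, ← hc j]
  simp [mul_apply, Finset.sum_apply, mul_comm]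

theorem rank_le_iff_exists_eq_mul [Fintype m] [Fintype n] [Field K] (M : Matrix m n K) (R : ℕ) :
    M.rank ≤ R ↔ ∃ (A : Matrix m (Fin R) K) (B : Matrix (Fin R) n K), M = A * B := by
  constructor
  · intro h
    rw [rank_eq_finrank_span_cols] at h
    obtain ⟨v, hv⟩ := Submodule.exists_fin_le_span_range_of_finrank_le _ h
    obtain ⟨B, hB⟩ :=
      M.exists_eq_mul_of_col_mem_span v fun j => hv (Submodule.subset_span ⟨j, rfl⟩)
    exact ⟨_, B, hB⟩
  · rintro ⟨A, B, rfl⟩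
    exact (rank_mul_le_right A B).trans ((rank_le_card_height B).trans_eq (Fintype.card_fin R))

end Matrix

section Rearrange

variable {m₁ m₂ n₁ n₂ : ℕ}

theorem rearrange_injective :
    Function.Injective (rearrange : Matrix (Fin m₁ × Fin m₂) (Fin n₁ × Fin n₂) ℝ → _) :=
  fun _ _ h => Matrix.ext fun i j => congrFun (congrFun h (i.1, j.1)) (i.2, j.2)

theorem rearrange_sum_kroneckerMap {R : ℕ} (B : Fin R → Matrix (Fin m₁) (Fin n₁) ℝ)
    (C : Fin R → Matrix (Fin m₂) (Fin n₂) ℝ) :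
    rearrange (∑ r, kroneckerMap (· * ·) (B r) (C r)) =
      (of fun p r => B r p.1 p.2) * of fun r q => C r q.1 q.2 := by
  ext p q
  simp [rearrange, mul_apply, Matrix.sum_apply]

end Rearrange

/-- Rank characterization of Kronecker sum decompositions: `G` is a sum of `R`
Kronecker products iff the rank of the rearranged matrix is at most `R`. -/
theorem kronecker_sum_iff_rank_le (m₁ m₂ n₁ n₂ R : ℕ)
    (G : Matrix (Fin m₁ × Fin m₂) (Fin n₁ × Fin n₂) ℝ) :
    (∃ (B : Fin R → Matrix (Fin m₁) (Fin n₁) ℝ)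
       (C : Fin R → Matrix (Fin m₂) (Fin n₂) ℝ),
       G = ∑ r, Matrix.kroneckerMap (· * ·) (B r) (C r)) ↔
    (rearrange G).rank ≤ R := by
  rw [rank_le_iff_exists_eq_mul]
  constructor
  · rintro ⟨B, C, rfl⟩
    exact ⟨_, _, rearrange_sum_kroneckerMap B C⟩
  · rintro ⟨A, D, hAD⟩
    refine ⟨fun r => of fun i j => A (i, j) r, fun r => of fun i j => D r (i, j),
      rearrange_injective ?_⟩
    rw [hAD, rearrange_sum_kroneckerMap]
    rfl
end

section
/- For every n : ℕ, the number of n-qubit Pauli strings containing an even number of Y labels equals (4^n + 2^n) / 2; precisely, the cardinality of the set {a : Fin n → Fin 4 | #Y(a) is even} is (4^n + 2^n) / 2, where #Y(a) is the number of positions k with a k equal to the label Y. -/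
/-- The number of `n`-qubit Pauli strings (functions `Fin n → Fin 4`, where the
label `Y` is `2`) containing an even number of `Y` labels is `(4^n + 2^n) / 2`. -/
theorem card_even_Y_strings (n : ℕ) :
    (Finset.univ.filter fun a : Fin n → Fin 4 =>
        Even (Finset.univ.filter fun k => a k = 2).card).card
      = (4 ^ n + 2 ^ n) / 2 := by
  suffices h : ∀ m, (Finset.univ.filter fun a : Fin m → Fin 4 =>
        Even (Finset.univ.filter fun k => a k = 2).card).card * 2 = 4 ^ m + 2 ^ m by
    have := h n
    generalize (Finset.univ.filter fun a : Fin n → Fin 4 =>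
        Even (Finset.univ.filter fun k => a k = 2).card).card = c at this ⊢
    omega
  intro m
  induction m with
  | zero => decide
  | succ m ih =>
    have hsplit : (Finset.univ.filter fun a : Fin m → Fin 4 =>
        Even (Finset.univ.filter fun k => a k = 2).card).card
        + (Finset.univ.filter fun a : Fin m → Fin 4 =>
        ¬ Even (Finset.univ.filter fun k => a k = 2).card).card = 4 ^ m := by
      rw [Finset.card_filter_add_card_filter_not]
      simp [Fintype.card_fun]
    have key : (Finset.univ.filter fun a : Fin (m+1) → Fin 4 =>
        Even (Finset.univ.filter fun k => a k = 2).card).card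
        = 2 * (Finset.univ.filter fun a : Fin m → Fin 4 =>
            Even (Finset.univ.filter fun k => a k = 2).card).card + 4 ^ m := by
      rw [Finset.card_filter]
      rw [← Equiv.sum_comp (Fin.consEquiv fun _ => Fin 4)]
      have hcard : ∀ p : Fin 4 × (Fin m → Fin 4),
          (Finset.univ.filter fun k : Fin (m+1) =>
            (Fin.consEquiv fun _ => Fin 4) p k = 2).card
          = (if p.1 = 2 then 1 else 0)
            + (Finset.univ.filter fun k : Fin m => p.2 k = 2).card := by
        intro p
        rw [Finset.card_filter, Finset.card_filter, Fin.sum_univ_succ]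
        simp [Fin.consEquiv, Fin.cons_zero, Fin.cons_succ]
      simp only [hcard]
      rw [Fintype.sum_prod_type, Fin.sum_univ_four]
      have h0 : ((0:Fin 4) = 2) = False := by decide
      have h1 : ((1:Fin 4) = 2) = False := by decide
      have h2 : ((2:Fin 4) = 2) = True := by decide
      have h3 : ((3:Fin 4) = 2) = False := by decide
      simp only [h0, h1, h2, h3, if_true, if_false, zero_add]
      have hodd : ∑ a : Fin m → Fin 4,
          (if Even (1 + (Finset.univ.filter fun k : Fin m => a k = 2).card) then 1 else 0)
          = (Finset.univ.filter fun a : Fin m → Fin 4 =>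
              ¬ Even (Finset.univ.filter fun k => a k = 2).card).card := by
        rw [Finset.card_filter]
        congr 1
        ext a
        congr 1
        rw [add_comm, Nat.even_add_one]
      have heven : ∑ a : Fin m → Fin 4,
          (if Even ((Finset.univ.filter fun k : Fin m => a k = 2).card) then 1 else 0)
          = (Finset.univ.filter fun a : Fin m → Fin 4 =>
              Even (Finset.univ.filter fun k => a k = 2).card).card := by
        rw [Finset.card_filter]
      rw [hodd, heven]
      generalize (Finset.univ.filter fun a : Fin m → Fin 4 =>
            Even (Finset.univ.filter fun k => a k = 2).card).card = c at hsplit ⊢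
      generalize (Finset.univ.filter fun a : Fin m → Fin 4 =>
            ¬ Even (Finset.univ.filter fun k => a k = 2).card).card = d at hsplit ⊢
      clear ih hcard h0 h1 h2 h3 hodd heven
      omega
    rw [key]
    generalize (Finset.univ.filter fun a : Fin m → Fin 4 =>
          Even (Finset.univ.filter fun k => a k = 2).card).card = c at ih ⊢
    rw [pow_succ, pow_succ]
    clear key hsplit
    omega
end
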